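/- Let ℳ₀(y,α) = {y} and ℳ_k(y,α) = τ_α(ℳ_{k-1}(y,α), 𝒮_α) where τ_α(y,z) = y + c(y,z,α) and 𝒮_α is the support of ν_α. If the function y ↦ g_β(0,y,x,θ) vanishes on ℳ_k(x,α̃) for k = 1,2 and ∂_y g_β(0,y,x,θ) vanishes on ℳ_k(x,α̃) for k = 0,1 for all α̃, then for the generator 𝓛 with jump coefficient c(·,·,α₀) and Lévy measure ν_{α₀}: 𝓛(g_j g_β(0,θ))(x,x) = 0 for any function g_j with g_j(0,x,x,θ) = 0. -/

import Mathlib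

open MeasureTheory

/-- The sets `ℳ_k(y,α)` of points reachable from `y` by `k` pure jumps:
`ℳ_0(y,α) = {y}` and `ℳ_k(y,α) = τ_α(ℳ_{k-1}(y,α), 𝒮_α)` with `τ_α(y,z) = y + c(y,z,α)`. -/
def Mset {A : Type*} (c : ℝ → ℝ → A → ℝ) (S : A → Set ℝ) : ℕ → ℝ → A → Set ℝ
  | 0, y, _ => {y}
  | k + 1, y, α =>
      (fun p : ℝ × ℝ => p.1 + c p.1 p.2 α) '' ((Mset c S k y α) ×ˢ (S α))

/-- The extended infinitesimal generator with drift `a`, diffusion coefficient `b`, jump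
coefficient `c` and Lévy measure `ν`, acting in `y` on `f(y,x)`. -/
noncomputable def gen (a b : ℝ → ℝ) (c : ℝ → ℝ → ℝ) (ν : Measure ℝ)
    (f : ℝ → ℝ → ℝ) (y x : ℝ) : ℝ :=
  a y * deriv (fun y' => f y' x) y
    + (1 / 2) * (b y) ^ 2 * deriv (deriv (fun y' => f y' x)) y
    + ∫ z, (f (y + c y z) x - f y x) ∂ν

/-- first identity of Lemma lemma:generators_rate: if `g_β(0,·,x,θ)` vanishes
on `ℳ_k(x,α̃)` for `k = 1,2` and `∂_y g_β(0,·,x,θ)` vanishes on `ℳ_k(x,α̃)` for `k = 0,1`,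
for all `α̃`, then for any `g_j` vanishing on the diagonal,
`𝓛(g_j g_β(0,θ))(x,x) = 0` for the generator at `α₀`, whose jumps from `x` land
`ν_{α₀}`-a.s. in `ℳ₁(x,α₀)`. -/
theorem stmt_16 {A : Type*} (a b : ℝ → ℝ) (c : ℝ → ℝ → A → ℝ) (S : A → Set ℝ)
    (α₀ : A) (ν : Measure ℝ) (hsupp : ∀ᵐ z ∂ν, z ∈ S α₀)
    (gj gβ : ℝ → ℝ → ℝ) -- arguments (y, x)
    (x : ℝ)
    (hsmj : ContDiff ℝ (⊤ : ℕ∞) (fun y => gj y x)) (hsmβ : ContDiff ℝ (⊤ : ℕ∞) (fun y => gβ y x))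
    (hgj : gj x x = 0) (hgβ0 : gβ x x = 0)
    (hgβ : ∀ α : A, ∀ k ∈ ({1, 2} : Set ℕ), ∀ y ∈ Mset c S k x α, gβ y x = 0)
    (hgβ' : ∀ α : A, ∀ k ∈ ({0, 1} : Set ℕ), ∀ y ∈ Mset c S k x α,
      deriv (fun y' => gβ y' x) y = 0) :
    gen a b (fun y z => c y z α₀) ν (fun y x' => gj y x' * gβ y x') x x = 0 := by
  classical
  set Gj : ℝ → ℝ := fun y => gj y x with hGj
  set Gβ : ℝ → ℝ := fun y => gβ y x with hGβ
  have hdj : Differentiable ℝ Gj := hsmj.differentiable (by simp)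
  have hdβ : Differentiable ℝ Gβ := hsmβ.differentiable (by simp)
  have hdj' : Differentiable ℝ (deriv Gj) :=
    ((contDiff_infty_iff_deriv.mp (hsmj.of_le (by simp))).2).differentiable (by simp)
  have hdβ' : Differentiable ℝ (deriv Gβ) :=
    ((contDiff_infty_iff_deriv.mp (hsmβ.of_le (by simp))).2).differentiable (by simp)
  have hβx : Gβ x = 0 := hgβ0
  have hβ'x : deriv Gβ x = 0 := by
    have := hgβ' α₀ 0 (by simp) x (by simp [Mset])
    simpa using this
  have hprod : deriv (fun y => Gj y * Gβ y) = fun y => deriv Gj y * Gβ y + Gj y * deriv Gβ y := by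
    funext y
    exact deriv_mul (hdj y) (hdβ y)
  have h1 : deriv (fun y' => gj y' x * gβ y' x) x = 0 := by
    have : deriv (fun y => Gj y * Gβ y) x = 0 := by
      rw [hprod]; simp [hβx, hβ'x]
    simpa using this
  have h2 : deriv (deriv (fun y' => gj y' x * gβ y' x)) x = 0 := by
    have e1 : (fun y' => gj y' x * gβ y' x) = fun y => Gj y * Gβ y := rfl
    rw [e1, hprod]
    rw [deriv_fun_add (f := fun y => deriv Gj y * Gβ y) (g := fun y => Gj y * deriv Gβ y) ((hdj'.mul hdβ) x) ((hdj.mul hdβ') x),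
        deriv_fun_mul (hdj' x) (hdβ x), deriv_fun_mul (hdj x) (hdβ' x)]
    simp only [hβx, hβ'x, mul_zero, zero_mul, add_zero, zero_add]
    exact mul_eq_zero.mpr (Or.inl hgj)
  have h3 : (∫ z, ((gj (x + c x z α₀) x * gβ (x + c x z α₀) x) - gj x x * gβ x x) ∂ν) = 0 := by
    have hz : ∀ᵐ z ∂ν,
        ((gj (x + c x z α₀) x * gβ (x + c x z α₀) x) - gj x x * gβ x x) = 0 := by
      filter_upwards [hsupp] with z hzS
      have hmem : x + c x z α₀ ∈ Mset c S 1 x α₀ := by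
        exact ⟨(x, z), ⟨by simp [Mset], hzS⟩, rfl⟩
      have := hgβ α₀ 1 (by simp) _ hmem
      simp [this, hgj, hgβ0]
    calc (∫ z, ((gj (x + c x z α₀) x * gβ (x + c x z α₀) x) - gj x x * gβ x x) ∂ν)
        = ∫ _z, (0:ℝ) ∂ν := integral_congr_ae hz
      _ = 0 := integral_zero _ _
  simp only [gen, h1, h2]
  simpa using h3
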